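/- Let k be an algebraically closed field of characteristic 0, and let f, h, a ∈ k⟨x⟩ with a ≠ 0 and f·a = a·h. Then for every n ∈ ℕ and every tuple X ∈ Mₙ(k)^d, the characteristic polynomial of f(X) equals the characteristic polynomial of h(X); in particular det(f(X) − λ·I) = det(h(X) − λ·I) for all λ ∈ k, so L_λ(f) = L_λ(h) for all λ ∈ k. -/

import Mathlib

/-- Evaluation of `f ∈ k⟨x⟩` at a `d`-tuple of `n × n` matrices. -/
noncomputable def matEval (k : Type*) [CommSemiring k] (d n : ℕ)
    (X : Fin d → Matrix (Fin n) (Fin n) k) :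
    FreeAlgebra k (Fin d) →ₐ[k] Matrix (Fin n) (Fin n) k :=
  FreeAlgebra.lift k X

/-!
Over a domain, `F * A = A * H` with `det A ≠ 0` gives
`charpoly F * det A = det A * charpoly H`, hence `charpoly F = charpoly H`. Since `a(Y)` itself
may be singular, deform the evaluation point to `Y + t Z` over `R[t]`: if `D` is the degree of `a`
and `a_D` its top homogeneous component, the coefficient of `t ^ (N * D)` in `det a(Y + t Z)` is
`det a_D(Z)`. So as soon as `a_D(Z)` is invertible, `f(Y + t Z)` and `h(Y + t Z)` have the same
characteristic polynomial, and `t = 0` gives the claim at `Y`.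

Such a `Z` exists in every size `N > D`: for the cyclic weighted shifts
`Z_i = ∑ p, u (i, p) • E p (p + 1)` with independent variables `u`, the matrix `a_D(Z)` is the
permutation matrix of `p ↦ p + D` times a diagonal of polynomials that are nonzero, because a word
of length `D ≤ N` can be read back from the monomial it contributes. Sizes `n ≤ D` are reached by
padding `X` with a zero block of size `D + 1`.
-/

open Polynomial

theorem Matrix.charpoly_eq_of_mul_eq_mul {R ι : Type*} [CommRing R] [IsDomain R] [Fintype ι]
    [DecidableEq ι] {F H A : Matrix ι ι R} (hA : A.det ≠ 0) (hFA : F * A = A * H) :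
    F.charpoly = H.charpoly := by
  have hconj : F.charmatrix * A.map C = A.map C * H.charmatrix :=
    matPolyEquiv.injective <| by
      rw [map_mul, map_mul, matPolyEquiv_charmatrix, matPolyEquiv_charmatrix, matPolyEquiv_map_C,
        sub_mul, mul_sub, ← C_mul, ← C_mul, hFA, (commute_X _).eq]
  have hdet : (A.map C).det ≠ 0 := by
    rw [← RingHom.mapMatrix_apply, ← RingHom.map_det]
    exact C_ne_zero.mpr hA
  refine mul_right_cancel₀ hdet ?_
  rw [charpoly, charpoly, ← det_mul, hconj, det_mul, mul_comm]

theorem Matrix.coeff_det_of_natDegree_le {R ι : Type*} [CommRing R] [Fintype ι] [DecidableEq ι]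
    (M : Matrix ι ι R[X]) (D : ℕ) (hM : ∀ i j, (M i j).natDegree ≤ D) :
    M.det.coeff (Fintype.card ι * D) = (M.map (coeff · D)).det := by
  simp only [det_apply, finsetSum_coeff, Units.smul_def, coeff_smul, map_apply]
  refine Finset.sum_congr rfl fun σ _ => ?_
  rw [Fintype.card, coeff_prod_of_natDegree_le _ _ D fun i _ => hM (σ i) i]

theorem natDegree_matPolyEquiv_symm_apply_le {R ι : Type*} [CommSemiring R] [Fintype ι]
    [DecidableEq ι] (P : (Matrix ι ι R)[X]) (i j : ι) :
    (matPolyEquiv.symm P i j).natDegree ≤ P.natDegree :=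
  natDegree_le_iff_coeff_eq_zero.mpr fun m hm => by
    rw [matPolyEquiv_symm_apply_coeff, coeff_eq_zero_of_natDegree_lt hm, Matrix.zero_apply]

theorem Matrix.det_sub_smul_one {R n : Type*} [CommRing R] [Fintype n] [DecidableEq n]
    (M : Matrix n n R) (μ : R) :
    (M - μ • (1 : Matrix n n R)).det = (-1) ^ Fintype.card n * M.charpoly.eval μ := by
  rw [eval_charpoly, ← det_neg, neg_sub, Matrix.scalar_apply, Matrix.smul_one_eq_diagonal]

namespace FreeAlgebra

theorem comp_lift {R α A B : Type*} [CommSemiring R] [Semiring A] [Algebra R A] [Semiring B]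
    [Algebra R B] (φ : A →ₐ[R] B) (Z : α → A) : φ.comp (lift R Z) = lift R (φ ∘ Z) :=
  hom_ext (by ext i; simp)

theorem lift_fromBlocks {R α m n : Type*} [CommSemiring R] [Fintype m] [Fintype n]
    [DecidableEq m] [DecidableEq n] (Y : α → Matrix m m R) (W : α → Matrix n n R)
    (b : FreeAlgebra R α) :
    lift R (fun i => Matrix.fromBlocks (Y i) 0 0 (W i)) b =
      Matrix.fromBlocks (lift R Y b) 0 0 (lift R W b) := by
  induction b using FreeAlgebra.induction with
  | grade0 r =>
    simp [Algebra.algebraMap_eq_smul_one, ← Matrix.fromBlocks_one, Matrix.fromBlocks_smul]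
  | grade1 i => simp
  | mul b c hb hc => simp [hb, hc, Matrix.fromBlocks_multiply]
  | add b c hb hc => simp [hb, hc, Matrix.fromBlocks_add]

section Degree
variable {R α : Type*} [CommSemiring R]

theorem basisFreeMonoid_apply (w : FreeMonoid α) :
    basisFreeMonoid R α w = (w.toList.map (ι R)).prod := by
  simp [basisFreeMonoid, equivMonoidAlgebraFreeMonoid, MonoidAlgebra.lift_single,
    FreeMonoid.lift_apply]

theorem lift_apply_eq_sum {A : Type*} [Semiring A] [Algebra R A] (Z : α → A)
    (a : FreeAlgebra R α) :
    lift R Z a = ((basisFreeMonoid R α).repr a).sum fun w c => c • (w.toList.map Z).prod := by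
  conv_lhs => rw [← (basisFreeMonoid R α).linearCombination_repr a]
  simp [Finsupp.linearCombination_apply, map_finsuppSum, basisFreeMonoid_apply, map_list_prod]

noncomputable def natDegree (a : FreeAlgebra R α) : ℕ :=
  ((basisFreeMonoid R α).repr a).support.sup FreeMonoid.length

noncomputable def homogeneousComponent (n : ℕ) (a : FreeAlgebra R α) : FreeAlgebra R α :=
  (basisFreeMonoid R α).repr.symm (((basisFreeMonoid R α).repr a).filter (·.length = n))

theorem length_le_natDegree {a : FreeAlgebra R α} {w : FreeMonoid α}
    (hw : w ∈ ((basisFreeMonoid R α).repr a).support) : w.length ≤ a.natDegree :=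
  Finset.le_sup hw

theorem exists_mem_support_length_eq_natDegree {a : FreeAlgebra R α} (ha : a ≠ 0) :
    ∃ w ∈ ((basisFreeMonoid R α).repr a).support, w.length = a.natDegree := by
  obtain ⟨w, hw, hlen⟩ := Finset.exists_mem_eq_sup _
    (Finsupp.support_nonempty_iff.mpr ((basisFreeMonoid R α).repr.map_ne_zero_iff.mpr ha))
    FreeMonoid.length
  exact ⟨w, hw, hlen.symm⟩

variable {A : Type*} [Semiring A] (x y : α → A)

theorem natDegree_list_prod_linear_le (w : List α) :
    (w.map fun i => C (y i) * X + C (x i)).prod.natDegree ≤ w.length := by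
  induction w with
  | nil => simp
  | cons i w ih =>
    rw [List.map_cons, List.prod_cons, List.length_cons]
    have := natDegree_linear_le (a := y i) (b := x i)
    exact natDegree_mul_le.trans (by omega)

theorem coeff_list_prod_linear_length (w : List α) :
    (w.map fun i => C (y i) * X + C (x i)).prod.coeff w.length = (w.map y).prod := by
  have h := coeff_list_prod_of_natDegree_le (w.map fun i => C (y i) * X + C (x i)) 1
    (by simpa only [List.forall_mem_map] using fun i _ => natDegree_linear_le (a := y i) (b := x i))
  simpa [Function.comp_def, coeff_C_mul_X, coeff_C] using h

theorem coeff_zero_list_prod_linear (w : List α) :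
    (w.map fun i => C (y i) * X + C (x i)).prod.coeff 0 = (w.map x).prod := by
  induction w with
  | nil => simp
  | cons i w ih => simp [mul_coeff_zero, ih]

variable [Algebra R A] (a : FreeAlgebra R α)

theorem natDegree_lift_linear_le :
    (lift R (fun i => C (y i) * X + C (x i)) a).natDegree ≤ a.natDegree := by
  rw [lift_apply_eq_sum, Finsupp.sum]
  refine natDegree_sum_le_of_forall_le _ _ fun w hw => ?_
  exact (natDegree_smul_le _ _).trans <|
    (natDegree_list_prod_linear_le x y _).trans (length_le_natDegree hw)

theorem coeff_lift_linear_natDegree :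
    (lift R (fun i => C (y i) * X + C (x i)) a).coeff a.natDegree =
      lift R y (homogeneousComponent a.natDegree a) := by
  rw [lift_apply_eq_sum, lift_apply_eq_sum, homogeneousComponent, LinearEquiv.apply_symm_apply,
    Finsupp.sum_filter_index, Finsupp.sum, finsetSum_coeff, Finsupp.support_filter,
    Finset.sum_filter]
  refine Finset.sum_congr rfl fun w hw => ?_
  split_ifs with hlen
  · rw [coeff_smul, ← hlen, FreeMonoid.length, coeff_list_prod_linear_length]
  · rw [coeff_smul, coeff_eq_zero_of_natDegree_lt, smul_zero]
    exact (natDegree_list_prod_linear_le x y _).trans_lt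
      ((length_le_natDegree hw).lt_of_ne hlen)

theorem coeff_zero_lift_linear :
    (lift R (fun i => C (y i) * X + C (x i)) a).coeff 0 = lift R x a := by
  simp only [lift_apply_eq_sum, Finsupp.sum, finsetSum_coeff, coeff_smul,
    coeff_zero_list_prod_linear]

end Degree

section CyclicShift
variable {k α : Type*} [CommSemiring k] {N : ℕ}

noncomputable def wordExponent : List α → ZMod N → (α × ZMod N →₀ ℕ)
  | [], _ => 0
  | i :: w, p => Finsupp.single (i, p) 1 + wordExponent w (p + 1)

theorem wordExponent_apply_add_ne_zero_iff (w : List α) (hw : w.length ≤ N) (p : ZMod N)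
    (i : α) {r : ℕ} (hr : r < N) : wordExponent w p (i, p + r) ≠ 0 ↔ w[r]? = some i := by
  induction w generalizing p r with
  | nil => simp [wordExponent]
  | cons j w ih =>
    have hwN : w.length < N := by simpa using hw
    rw [wordExponent, Finsupp.add_apply]
    cases r with
    | zero =>
      have hwrap : p + 1 + ((N - 1 : ℕ) : ZMod N) = p := by
        rw [Nat.cast_sub hr, ZMod.natCast_self]; ring
      have htail : wordExponent w (p + 1) (i, p) = 0 := by
        have := ih hwN.le (p + 1) (r := N - 1) (by omega)
        rw [hwrap, List.getElem?_eq_none (by omega)] at this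
        simpa using this
      rw [Nat.cast_zero, add_zero, htail, add_zero, Finsupp.single_apply_ne_zero]
      simp [eq_comm]
    | succ s =>
      have hne : (i, p + ((s + 1 : ℕ) : ZMod N)) ≠ (j, p) := by
        intro h
        have := (ZMod.natCast_eq_zero_iff (s + 1) N).mp (add_eq_left.mp (congrArg Prod.snd h))
        exact absurd (Nat.le_of_dvd s.succ_pos this) (by omega)
      have hshift : p + ((s + 1 : ℕ) : ZMod N) = p + 1 + s := by push_cast; ring
      rw [Finsupp.single_eq_of_ne hne, zero_add, hshift, ih hwN.le _ (by omega),
        List.getElem?_cons_succ]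

theorem wordExponent_injOn (p : ZMod N) :
    Set.InjOn (wordExponent · p) {w : List α | w.length ≤ N} := by
  intro w hw w' hw' h
  refine List.ext_getElem? fun r => ?_
  by_cases hr : r < N
  · refine Option.ext fun i => ?_
    rw [← wordExponent_apply_add_ne_zero_iff w hw p i hr,
      ← wordExponent_apply_add_ne_zero_iff w' hw' p i hr]
    exact Iff.of_eq (congrArg (fun m : α × ZMod N →₀ ℕ => m (i, p + r) ≠ 0) h)
  · have hlen : w.length ≤ N ∧ w'.length ≤ N := ⟨hw, hw'⟩
    rw [List.getElem?_eq_none (by omega), List.getElem?_eq_none (by omega)]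

variable (k N) in
noncomputable def weightedShift (i : α) :
    Matrix (ZMod N) (ZMod N) (MvPolynomial (α × ZMod N) k) :=
  Matrix.of fun p q => if q = p + 1 then MvPolynomial.X (i, p) else 0

theorem list_prod_map_weightedShift_apply [NeZero N] (w : List α) (p q : ZMod N) :
    (w.map (weightedShift k N)).prod p q =
      if q = p + w.length then MvPolynomial.monomial (wordExponent w p) 1 else 0 := by
  induction w generalizing p with
  | nil => simp [Matrix.one_apply, eq_comm, wordExponent]
  | cons i w ih =>
    have hlen : p + ((w.length + 1 : ℕ) : ZMod N) = p + 1 + w.length := by push_cast; ring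
    rw [List.map_cons, List.prod_cons, Matrix.mul_apply, Finset.sum_eq_single (p + 1)]
    · simp only [weightedShift, Matrix.of_apply, if_true, ih, List.length_cons, hlen, mul_ite,
        mul_zero, wordExponent, MvPolynomial.X, MvPolynomial.monomial_mul, one_mul]
    · intro s _ hs
      simp [weightedShift, hs]
    · simp

noncomputable def shiftWeight (a : FreeAlgebra k α) (D : ℕ) (p : ZMod N) :
    MvPolynomial (α × ZMod N) k :=
  ∑ w ∈ ((basisFreeMonoid k α).repr a).support.filter (·.length = D),
    MvPolynomial.monomial (wordExponent w.toList p) ((basisFreeMonoid k α).repr a w)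

theorem lift_weightedShift_homogeneousComponent [NeZero N] (a : FreeAlgebra k α) (D : ℕ) :
    lift k (weightedShift k N) (homogeneousComponent D a) =
      Matrix.diagonal (shiftWeight a D) * (Equiv.addRight (D : ZMod N)).permMatrix _ := by
  refine Matrix.ext fun p q => ?_
  rw [lift_apply_eq_sum, homogeneousComponent, LinearEquiv.apply_symm_apply,
    Finsupp.sum_filter_index, Finsupp.support_filter]
  simp only [Matrix.sum_apply, Matrix.diagonal_mul, shiftWeight, Finset.sum_mul]
  refine Finset.sum_congr rfl fun w hw => ?_
  rw [(Finset.mem_filter.mp hw).2.symm]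
  simp [list_prod_map_weightedShift_apply, MvPolynomial.smul_monomial, eq_comm, FreeMonoid.length]

theorem shiftWeight_ne_zero {a : FreeAlgebra k α} {w : FreeMonoid α}
    (hw : w ∈ ((basisFreeMonoid k α).repr a).support) (hN : w.length ≤ N) (p : ZMod N) :
    shiftWeight a w.length p ≠ 0 := by
  classical
  intro h0
  have hcoeff := congrArg (MvPolynomial.coeff (wordExponent w.toList p)) h0
  rw [shiftWeight, MvPolynomial.coeff_sum, Finset.sum_eq_single w] at hcoeff
  · rw [MvPolynomial.coeff_monomial, if_pos rfl, MvPolynomial.coeff_zero] at hcoeff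
    exact Finsupp.mem_support_iff.mp hw hcoeff
  · intro w' hw' hne
    rw [MvPolynomial.coeff_monomial, if_neg]
    intro heq
    have hlen := (Finset.mem_filter.mp hw').2
    exact hne (FreeMonoid.toList.injective
      (wordExponent_injOn p (show w'.length ≤ N by omega) (show w.length ≤ N from hN) heq))
  · exact fun hw' => (hw' (Finset.mem_filter.mpr ⟨hw, rfl⟩)).elim

end CyclicShift

theorem det_lift_weightedShift_ne_zero {k α : Type*} [CommRing k] [IsDomain k] {N : ℕ}
    [NeZero N] {a : FreeAlgebra k α} (ha : a ≠ 0) (hN : a.natDegree ≤ N) :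
    (lift k (weightedShift k N) (homogeneousComponent a.natDegree a)).det ≠ 0 := by
  obtain ⟨w, hw, hlen⟩ := exists_mem_support_length_eq_natDegree ha
  rw [lift_weightedShift_homogeneousComponent, Matrix.det_mul, Matrix.det_diagonal,
    Matrix.det_permutation, ← hlen]
  refine mul_ne_zero (Finset.prod_ne_zero_iff.mpr fun p _ => ?_) ?_
  · exact shiftWeight_ne_zero hw (hlen ▸ hN) p
  · exact ((Equiv.Perm.sign _).isUnit.map (Int.castRingHom _)).ne_zero

theorem charpoly_lift_eq_of_det_lift_homogeneousComponent_ne_zero {k R α ι : Type*}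
    [CommSemiring k] [CommRing R] [IsDomain R] [Algebra k R] [Fintype ι] [DecidableEq ι]
    {f h a : FreeAlgebra k α} (hfa : f * a = a * h) (Z : α → Matrix ι ι R)
    (hZ : (lift k Z (homogeneousComponent a.natDegree a)).det ≠ 0) (Y : α → Matrix ι ι R) :
    (lift k Y f).charpoly = (lift k Y h).charpoly := by
  set L := lift k fun i => C (Z i) * X + C (Y i)
  set M : FreeAlgebra k α → Matrix ι ι R[X] := fun b => matPolyEquiv.symm (L b)
  have hM : M f * M a = M a * M h := by simp only [M, ← map_mul, hfa]
  have hdet : (M a).det ≠ 0 := by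
    have hcoeff := Matrix.coeff_det_of_natDegree_le (M a) a.natDegree fun i j =>
      (natDegree_matPolyEquiv_symm_apply_le _ i j).trans (natDegree_lift_linear_le Y Z a)
    have htop :
        (M a).map (coeff · a.natDegree) = lift k Z (homogeneousComponent a.natDegree a) := by
      ext i j
      simp [M, L, matPolyEquiv_symm_apply_coeff, coeff_lift_linear_natDegree]
    rw [htop] at hcoeff
    exact fun h0 => hZ (by rw [← hcoeff, h0, coeff_zero])
  have hconst (b : FreeAlgebra k α) : (M b).map constantCoeff = lift k Y b := by
    ext i j
    simp [M, L, matPolyEquiv_symm_apply_coeff, coeff_zero_lift_linear]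
  rw [← hconst, ← hconst, Matrix.charpoly_map, Matrix.charpoly_map,
    Matrix.charpoly_eq_of_mul_eq_mul hdet hM]

theorem charpoly_lift_eq_of_natDegree_lt {k α ι : Type*} [CommRing k] [IsDomain k] [Fintype ι]
    [DecidableEq ι] {f h a : FreeAlgebra k α} (ha : a ≠ 0) (hfa : f * a = a * h)
    (hι : a.natDegree < Fintype.card ι) (Y : α → Matrix ι ι k) :
    (lift k Y f).charpoly = (lift k Y h).charpoly := by
  set N := Fintype.card ι
  have : NeZero N := ⟨by omega⟩
  let e : ZMod N ≃ ι := Fintype.equivOfCardEq (by simp [N])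
  let R := MvPolynomial (α × ZMod N) k
  have hZ := det_lift_weightedShift_ne_zero ha hι.le
  rw [← Matrix.det_reindex_self e, ← Matrix.coe_reindexAlgEquiv k R, ← AlgHom.coe_coe,
    ← AlgHom.comp_apply, comp_lift] at hZ
  have hmap (b : FreeAlgebra k α) :
      lift k ((Algebra.ofId k R).mapMatrix ∘ Y) b = (lift k Y b).map (algebraMap k R) :=
    (DFunLike.congr_fun (comp_lift _ Y) b).symm
  refine Polynomial.map_injective (algebraMap k R) (MvPolynomial.C_injective _ _) ?_
  rw [← Matrix.charpoly_map, ← Matrix.charpoly_map, ← hmap, ← hmap]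
  exact charpoly_lift_eq_of_det_lift_homogeneousComponent_ne_zero hfa _ hZ _

end FreeAlgebra

theorem charpoly_eq_of_intertwined_general (k : Type*) [Field k]
    (d : ℕ)
    (f h a : FreeAlgebra k (Fin d)) (ha : a ≠ 0) (hfa : f * a = a * h) :
    ∀ (n : ℕ) (X : Fin d → Matrix (Fin n) (Fin n) k),
      (matEval k d n X f).charpoly = (matEval k d n X h).charpoly ∧
      ∀ μ : k,
        (matEval k d n X f - μ • (1 : Matrix (Fin n) (Fin n) k)).det =
        (matEval k d n X h - μ • (1 : Matrix (Fin n) (Fin n) k)).det := by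
  intro n X
  have hcharpoly : (matEval k d n X f).charpoly = (matEval k d n X h).charpoly := by
    have hsmall := FreeAlgebra.charpoly_lift_eq_of_natDegree_lt ha hfa
      (ι := Fin (a.natDegree + 1)) (by simp) fun _ => 0
    have hbig := FreeAlgebra.charpoly_lift_eq_of_natDegree_lt ha hfa
      (ι := Fin n ⊕ Fin (a.natDegree + 1)) (by simp; omega)
      fun i => Matrix.fromBlocks (X i) 0 0 0
    rw [FreeAlgebra.lift_fromBlocks, FreeAlgebra.lift_fromBlocks,
      Matrix.charpoly_fromBlocks_zero₁₂, Matrix.charpoly_fromBlocks_zero₁₂, hsmall] at hbig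
    exact mul_right_cancel₀ (Matrix.charpoly_monic _).ne_zero hbig
  refine ⟨hcharpoly, fun μ => ?_⟩
  rw [Matrix.det_sub_smul_one, Matrix.det_sub_smul_one, hcharpoly]

/-- If `a ≠ 0` and `f a = a h` in `k⟨x⟩`, then `f(X)` and `h(X)` have the same
characteristic polynomial for every matrix tuple `X`; in particular
`det (f(X) - λ I) = det (h(X) - λ I)` for all `λ`, so `L_λ(f) = L_λ(h)` for all `λ`. -/
theorem charpoly_eq_of_intertwined (k : Type*) [Field k] [IsAlgClosed k] [CharZero k]
    (d : ℕ) (hd : 0 < d)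
    (f h a : FreeAlgebra k (Fin d)) (ha : a ≠ 0) (hfa : f * a = a * h) :
    ∀ (n : ℕ) (X : Fin d → Matrix (Fin n) (Fin n) k),
      (matEval k d n X f).charpoly = (matEval k d n X h).charpoly ∧
      ∀ μ : k,
        (matEval k d n X f - μ • (1 : Matrix (Fin n) (Fin n) k)).det =
        (matEval k d n X h - μ • (1 : Matrix (Fin n) (Fin n) k)).det :=
  charpoly_eq_of_intertwined_general k d f h a ha hfa
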